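/- Let N ≥ 8 be an integer and let A be the (N+1)×(N+1) real matrix with rows and columns indexed by 0, 1, …, N defined as follows: for 0 ≤ i ≤ N−2, A_{i,j} = 1 if j ∈ {i, i+1, i+2} and A_{i,j} = 0 otherwise; row N−1 has entries 1 at columns 0, 1, 3, 4, 5, N−2, entries 2 at columns 2, N−1, N, and 0 elsewhere; row N has entries 2 at columns 0, 1, 3, N, entry 3 at column 2, entries 1 at columns 4, 5, N−2, N−1, and 0 elsewhere. Then det A = 3 if N mod 3 ∈ {0, 2}, and det A = 0 if N mod 3 = 1. -/
import Mathlib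


/-- The `(N+1)×(N+1)` coefficient matrix of the log-linearized system
`Λ_i + Λ_{i+1} + Λ_{i+2} = G_i` determining the normalized lift of a twisted
pentagram spiral of type `(N,1)`.  Rows `0 ≤ i ≤ N−2` have `1` at columns
`i, i+1, i+2`; row `N−1` has `1` at columns `0,1,3,4,5,N−2` and `2` at columns
`2,N−1,N`; row `N` has `2` at columns `0,1,3,N`, `3` at column `2` and `1` at
columns `4,5,N−2,N−1`. -/
def spiralCoeffMat (N : ℕ) : Matrix (Fin (N + 1)) (Fin (N + 1)) ℝ :=
  Matrix.of fun i j =>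
    if (i : ℕ) ≤ N - 2 then
      if (j : ℕ) = (i : ℕ) ∨ (j : ℕ) = (i : ℕ) + 1 ∨ (j : ℕ) = (i : ℕ) + 2 then 1 else 0
    else if (i : ℕ) = N - 1 then
      if (j : ℕ) = 0 ∨ (j : ℕ) = 1 ∨ (j : ℕ) = 3 ∨ (j : ℕ) = 4 ∨ (j : ℕ) = 5 ∨
          (j : ℕ) = N - 2 then 1
      else if (j : ℕ) = 2 ∨ (j : ℕ) = N - 1 ∨ (j : ℕ) = N then 2
      else 0
    else
      if (j : ℕ) = 2 then 3
      else if (j : ℕ) = 0 ∨ (j : ℕ) = 1 ∨ (j : ℕ) = 3 ∨ (j : ℕ) = N then 2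
      else if (j : ℕ) = 4 ∨ (j : ℕ) = 5 ∨ (j : ℕ) = N - 2 ∨ (j : ℕ) = N - 1 then 1
      else 0

open Matrix Finset

/-- periodic pattern for row `N-1` elimination coefficients -/
noncomputable def pp (j : ℕ) : ℝ :=
  if j % 3 = 0 then -1 else if j % 3 = 1 then 0 else 1

/-- periodic pattern for row `N` elimination coefficients -/
noncomputable def qq (j : ℕ) : ℝ :=
  if j % 3 = 0 then 0 else if j % 3 = 1 then -1 else 1

/-- coefficients expressing row `N-1` of the spiral matrix in the banded basis -/
noncomputable def cA (N j : ℕ) : ℝ :=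
  if j = 0 then 1 else if j = 3 then 0
  else if j = N - 2 then (if N % 3 = 0 then 1 else if N % 3 = 1 then 2 else 0)
  else if j = N - 1 then (if N % 3 = 0 then 2 else if N % 3 = 1 then 0 else 1)
  else if j = N then (if N % 3 = 0 then -1 else if N % 3 = 1 then 0 else 1)
  else pp j

/-- coefficients expressing row `N` of the spiral matrix in the banded basis -/
noncomputable def cB (N j : ℕ) : ℝ :=
  if j = 0 then 2 else if j = 1 then 0 else if j = 3 then 1
  else if j = N - 2 then (if N % 3 = 0 then 0 else if N % 3 = 1 then 2 else 1)
  else if j = N - 1 then (if N % 3 = 0 then 1 else if N % 3 = 1 then 0 else -1)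
  else if j = N then (if N % 3 = 0 then 1 else if N % 3 = 1 then 0 else 2)
  else qq j

/-- the coefficient matrix `T` -/
noncomputable def Tmat (N : ℕ) : Matrix (Fin (N + 1)) (Fin (N + 1)) ℝ :=
  Matrix.of fun i j =>
    if (i : ℕ) ≤ N - 2 then (if (j : ℕ) = (i : ℕ) then 1 else 0)
    else if (i : ℕ) = N - 1 then cA N (j : ℕ) else cB N (j : ℕ)

/-- the banded unit upper triangular matrix `B` -/
noncomputable def Bmat (N : ℕ) : Matrix (Fin (N + 1)) (Fin (N + 1)) ℝ :=
  Matrix.of fun i j =>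
    if (j : ℕ) = (i : ℕ) ∨ (j : ℕ) = (i : ℕ) + 1 ∨ (j : ℕ) = (i : ℕ) + 2 then 1 else 0

lemma sum_band (n j : ℕ) (hj : j < n) (c : ℕ → ℝ) :
    ∑ k ∈ Finset.range n, c k * (if j = k ∨ j = k + 1 ∨ j = k + 2 then (1:ℝ) else 0)
      = c j + (if 1 ≤ j then c (j - 1) else 0) + (if 2 ≤ j then c (j - 2) else 0) := by
  have hsplit : ∀ k, c k * (if j = k ∨ j = k + 1 ∨ j = k + 2 then (1:ℝ) else 0)
      = (if k = j then c k else 0) + ((if k = j - 1 ∧ 1 ≤ j then c k else 0)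
        + (if k = j - 2 ∧ 2 ≤ j then c k else 0)) := by
    intro k
    by_cases hd : j = k ∨ j = k + 1 ∨ j = k + 2
    · rw [if_pos hd, mul_one]
      rcases hd with h | h | h
      · rw [if_pos (by omega), if_neg (by omega), if_neg (by omega)]; ring
      · rw [if_neg (by omega), if_pos (by omega), if_neg (by omega)]; ring
      · rw [if_neg (by omega), if_neg (by omega), if_pos (by omega)]; ring
    · rw [if_neg hd, mul_zero, if_neg (by omega), if_neg (by omega), if_neg (by omega)]; ring
  have S1 : ∑ k ∈ Finset.range n, (if k = j then c k else 0) = c j := by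
    rw [Finset.sum_ite_eq' (Finset.range n) j c, if_pos (Finset.mem_range.2 hj)]
  have S2 : ∑ k ∈ Finset.range n, (if k = j - 1 ∧ 1 ≤ j then c k else 0)
      = (if 1 ≤ j then c (j - 1) else 0) := by
    by_cases h1 : 1 ≤ j
    · have he : ∀ k, (if k = j - 1 ∧ 1 ≤ j then c k else 0)
          = (if k = j - 1 then c k else 0) := by
        intro k; by_cases hk : k = j - 1 <;> simp [hk, h1]
      rw [Finset.sum_congr rfl (fun k _ => he k), Finset.sum_ite_eq' (Finset.range n) (j-1) c,
        if_pos (Finset.mem_range.2 (by omega)), if_pos h1]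
    · rw [if_neg h1]
      exact Finset.sum_eq_zero fun k _ => if_neg (by omega)
  have S3 : ∑ k ∈ Finset.range n, (if k = j - 2 ∧ 2 ≤ j then c k else 0)
      = (if 2 ≤ j then c (j - 2) else 0) := by
    by_cases h2 : 2 ≤ j
    · have he : ∀ k, (if k = j - 2 ∧ 2 ≤ j then c k else 0)
          = (if k = j - 2 then c k else 0) := by
        intro k; by_cases hk : k = j - 2 <;> simp [hk, h2]
      rw [Finset.sum_congr rfl (fun k _ => he k), Finset.sum_ite_eq' (Finset.range n) (j-2) c,
        if_pos (Finset.mem_range.2 (by omega)), if_pos h2]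
    · rw [if_neg h2]
      exact Finset.sum_eq_zero fun k _ => if_neg (by omega)
  rw [Finset.sum_congr rfl (fun k _ => hsplit k), Finset.sum_add_distrib,
    Finset.sum_add_distrib, S1, S2, S3]
  ring

lemma pp_sum (j : ℕ) (hj : 2 ≤ j) : pp j + pp (j - 1) + pp (j - 2) = 0 := by
  unfold pp
  have h : j % 3 = 0 ∨ j % 3 = 1 ∨ j % 3 = 2 := by omega
  rcases h with h | h | h
  · rw [if_pos h, if_neg (show ¬((j-1) % 3 = 0) by omega), if_neg (show ¬((j-1) % 3 = 1) by omega),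
      if_neg (show ¬((j-2) % 3 = 0) by omega), if_pos (show (j-2) % 3 = 1 by omega)]
    norm_num
  · rw [if_neg (by omega), if_pos h, if_pos (show (j-1) % 3 = 0 by omega),
      if_neg (show ¬((j-2) % 3 = 0) by omega), if_neg (show ¬((j-2) % 3 = 1) by omega)]
    norm_num
  · rw [if_neg (by omega), if_neg (by omega), if_neg (show ¬((j-1) % 3 = 0) by omega),
      if_pos (show (j-1) % 3 = 1 by omega), if_pos (show (j-2) % 3 = 0 by omega)]
    norm_num

lemma qq_sum (j : ℕ) (hj : 2 ≤ j) : qq j + qq (j - 1) + qq (j - 2) = 0 := by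
  unfold qq
  have h : j % 3 = 0 ∨ j % 3 = 1 ∨ j % 3 = 2 := by omega
  rcases h with h | h | h
  · rw [if_pos h, if_neg (show ¬((j-1) % 3 = 0) by omega), if_neg (show ¬((j-1) % 3 = 1) by omega),
      if_neg (show ¬((j-2) % 3 = 0) by omega), if_pos (show (j-2) % 3 = 1 by omega)]
    norm_num
  · rw [if_neg (by omega), if_pos h, if_pos (show (j-1) % 3 = 0 by omega),
      if_neg (show ¬((j-2) % 3 = 0) by omega), if_neg (show ¬((j-2) % 3 = 1) by omega)]
    norm_num
  · rw [if_neg (by omega), if_neg (by omega), if_neg (show ¬((j-1) % 3 = 0) by omega),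
      if_pos (show (j-1) % 3 = 1 by omega), if_pos (show (j-2) % 3 = 0 by omega)]
    norm_num

lemma cA_mid (N j : ℕ) (hN : 8 ≤ N) (hj : j = 1 ∨ j = 2 ∨ (4 ≤ j ∧ j + 3 ≤ N)) :
    cA N j = pp j := by
  unfold cA
  rw [if_neg (by omega), if_neg (by omega), if_neg (by omega), if_neg (by omega),
    if_neg (by omega)]

lemma cB_mid (N j : ℕ) (hN : 8 ≤ N) (hj : j = 2 ∨ (4 ≤ j ∧ j + 3 ≤ N)) :
    cB N j = qq j := by
  unfold cB
  rw [if_neg (by omega), if_neg (by omega), if_neg (by omega), if_neg (by omega),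
    if_neg (by omega), if_neg (by omega)]

lemma cA_K6 (K : ℕ) :
    cA (K + 8) (K + 6) = if (K + 8) % 3 = 0 then 1 else if (K + 8) % 3 = 1 then 2 else 0 := by
  unfold cA
  rw [if_neg (by omega), if_neg (by omega), if_pos (by omega)]

lemma cA_K7 (K : ℕ) :
    cA (K + 8) (K + 7) = if (K + 8) % 3 = 0 then 2 else if (K + 8) % 3 = 1 then 0 else 1 := by
  unfold cA
  rw [if_neg (by omega), if_neg (by omega), if_neg (by omega), if_pos (by omega)]

lemma cA_K8 (K : ℕ) :
    cA (K + 8) (K + 8) = if (K + 8) % 3 = 0 then -1 else if (K + 8) % 3 = 1 then 0 else 1 := by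
  unfold cA
  rw [if_neg (by omega), if_neg (by omega), if_neg (by omega), if_neg (by omega),
    if_pos (by omega)]

lemma cB_K6 (K : ℕ) :
    cB (K + 8) (K + 6) = if (K + 8) % 3 = 0 then 0 else if (K + 8) % 3 = 1 then 2 else 1 := by
  unfold cB
  rw [if_neg (by omega), if_neg (by omega), if_neg (by omega), if_pos (by omega)]

lemma cB_K7 (K : ℕ) :
    cB (K + 8) (K + 7) = if (K + 8) % 3 = 0 then 1 else if (K + 8) % 3 = 1 then 0 else -1 := by
  unfold cB
  rw [if_neg (by omega), if_neg (by omega), if_neg (by omega), if_neg (by omega),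
    if_pos (by omega)]

lemma cB_K8 (K : ℕ) :
    cB (K + 8) (K + 8) = if (K + 8) % 3 = 0 then 1 else if (K + 8) % 3 = 1 then 0 else 2 := by
  unfold cB
  rw [if_neg (by omega), if_neg (by omega), if_neg (by omega), if_neg (by omega),
    if_neg (by omega), if_pos (by omega)]

lemma cA_0 (N : ℕ) : cA N 0 = 1 := by unfold cA; rw [if_pos rfl]
lemma cA_3 (N : ℕ) (hN : 8 ≤ N) : cA N 3 = 0 := by
  unfold cA; rw [if_neg (by omega), if_pos rfl]
lemma cB_0 (N : ℕ) : cB N 0 = 2 := by unfold cB; rw [if_pos rfl]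
lemma cB_1 (N : ℕ) : cB N 1 = 0 := by unfold cB; rw [if_neg (by omega), if_pos rfl]
lemma cB_3 (N : ℕ) (hN : 8 ≤ N) : cB N 3 = 1 := by
  unfold cB; rw [if_neg (by omega), if_neg (by omega), if_pos rfl]

lemma pp_1 : pp 1 = 0 := by norm_num [pp]
lemma pp_2 : pp 2 = 1 := by norm_num [pp]
lemma pp_4 : pp 4 = 0 := by norm_num [pp]
lemma pp_5 : pp 5 = 1 := by norm_num [pp]
lemma qq_2 : qq 2 = 1 := by norm_num [qq]
lemma qq_4 : qq 4 = -1 := by norm_num [qq]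
lemma qq_5 : qq 5 = 1 := by norm_num [qq]

lemma rowA (K j : ℕ) (hj : j ≤ K + 8) :
    cA (K + 8) j + (if 1 ≤ j then cA (K + 8) (j - 1) else 0)
      + (if 2 ≤ j then cA (K + 8) (j - 2) else 0)
    = if j = 0 ∨ j = 1 ∨ j = 3 ∨ j = 4 ∨ j = 5 ∨ j = K + 6 then 1
      else if j = 2 ∨ j = K + 7 ∨ j = K + 8 then 2 else 0 := by
  have hN : 8 ≤ K + 8 := by omega
  have hmod : (K + 8) % 3 = 0 ∨ (K + 8) % 3 = 1 ∨ (K + 8) % 3 = 2 := by omega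
  rcases Nat.lt_or_ge j 6 with h6 | h6
  · interval_cases j
    · rw [if_neg (show ¬(1 ≤ 0) by omega), if_neg (show ¬(2 ≤ 0) by omega), cA_0,
        if_pos (by omega)]
      norm_num
    · rw [if_pos (show 1 ≤ 1 by omega), if_neg (show ¬(2 ≤ 1) by omega), cA_0,
        cA_mid _ 1 hN (by omega), pp_1, if_pos (by omega)]
      norm_num
    · rw [if_pos (show 1 ≤ 2 by omega), if_pos (show 2 ≤ 2 by omega), cA_0,
        cA_mid _ 1 hN (by omega), cA_mid _ 2 hN (by omega), pp_1, pp_2,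
        if_neg (show ¬(2 = 0 ∨ 2 = 1 ∨ 2 = 3 ∨ 2 = 4 ∨ 2 = 5 ∨ 2 = K + 6) by omega),
        if_pos (show 2 = 2 ∨ 2 = K + 7 ∨ 2 = K + 8 by omega)]
      norm_num
    · rw [if_pos (show 1 ≤ 3 by omega), if_pos (show 2 ≤ 3 by omega), cA_3 _ hN,
        cA_mid _ 1 hN (by omega), cA_mid _ 2 hN (by omega), pp_1, pp_2,
        if_pos (by omega)]
      norm_num
    · rw [if_pos (show 1 ≤ 4 by omega), if_pos (show 2 ≤ 4 by omega), cA_3 _ hN,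
        cA_mid _ 4 hN (by omega), cA_mid _ 2 hN (by omega), pp_4, pp_2,
        if_pos (by omega)]
      norm_num
    · rw [if_pos (show 1 ≤ 5 by omega), if_pos (show 2 ≤ 5 by omega), cA_3 _ hN,
        cA_mid _ 4 hN (by omega), cA_mid _ 5 hN (by omega), pp_4, pp_5,
        if_pos (by omega)]
      norm_num
  · rcases Nat.lt_or_ge j (K + 6) with hm | hm
    · -- middle zone 6 ≤ j ≤ K+5
      rw [if_pos (show 1 ≤ j by omega), if_pos (show 2 ≤ j by omega),
        cA_mid _ j hN (by omega), cA_mid _ (j-1) hN (by omega), cA_mid _ (j-2) hN (by omega),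
        if_neg (show ¬(j = 0 ∨ j = 1 ∨ j = 3 ∨ j = 4 ∨ j = 5 ∨ j = K + 6) by omega),
        if_neg (show ¬(j = 2 ∨ j = K + 7 ∨ j = K + 8) by omega)]
      exact pp_sum j (by omega)
    · have hj3 : j = K + 6 ∨ j = K + 7 ∨ j = K + 8 := by omega
      rcases hj3 with rfl | rfl | rfl
      · rw [show K + 6 - 1 = K + 5 by omega, show K + 6 - 2 = K + 4 by omega,
          if_pos (show 1 ≤ K + 6 by omega), if_pos (show 2 ≤ K + 6 by omega),
          cA_K6, cA_mid _ (K+5) hN (by omega), cA_mid _ (K+4) hN (by omega),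
          if_pos (show K + 6 = 0 ∨ K + 6 = 1 ∨ K + 6 = 3 ∨ K + 6 = 4 ∨ K + 6 = 5 ∨
            K + 6 = K + 6 by omega)]
        rcases hmod with h | h | h
        · simp only [pp, h, show (K+5) % 3 = 0 by omega, show (K+4) % 3 = 2 by omega]
          norm_num
        · simp only [pp, h, show (K+5) % 3 = 1 by omega, show (K+4) % 3 = 0 by omega]
          norm_num
        · simp only [pp, h, show (K+5) % 3 = 2 by omega, show (K+4) % 3 = 1 by omega]
          norm_num
      · rw [show K + 7 - 1 = K + 6 by omega, show K + 7 - 2 = K + 5 by omega,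
          if_pos (show 1 ≤ K + 7 by omega), if_pos (show 2 ≤ K + 7 by omega),
          cA_K7, cA_K6, cA_mid _ (K+5) hN (by omega),
          if_neg (show ¬(K + 7 = 0 ∨ K + 7 = 1 ∨ K + 7 = 3 ∨ K + 7 = 4 ∨ K + 7 = 5 ∨
            K + 7 = K + 6) by omega),
          if_pos (show K + 7 = 2 ∨ K + 7 = K + 7 ∨ K + 7 = K + 8 by omega)]
        rcases hmod with h | h | h
        · simp only [pp, h, show (K+5) % 3 = 0 by omega]; norm_num
        · simp only [pp, h, show (K+5) % 3 = 1 by omega]; norm_num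
        · simp only [pp, h, show (K+5) % 3 = 2 by omega]; norm_num
      · rw [show K + 8 - 1 = K + 7 by omega, show K + 8 - 2 = K + 6 by omega,
          if_pos (show 1 ≤ K + 8 by omega), if_pos (show 2 ≤ K + 8 by omega),
          cA_K8, cA_K7, cA_K6,
          if_neg (show ¬(K + 8 = 0 ∨ K + 8 = 1 ∨ K + 8 = 3 ∨ K + 8 = 4 ∨ K + 8 = 5 ∨
            K + 8 = K + 6) by omega),
          if_pos (show K + 8 = 2 ∨ K + 8 = K + 7 ∨ K + 8 = K + 8 by omega)]
        rcases hmod with h | h | h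
        · simp only [h]; norm_num
        · simp only [h]; norm_num
        · simp only [h]; norm_num

lemma rowB (K j : ℕ) (hj : j ≤ K + 8) :
    cB (K + 8) j + (if 1 ≤ j then cB (K + 8) (j - 1) else 0)
      + (if 2 ≤ j then cB (K + 8) (j - 2) else 0)
    = if j = 2 then 3
      else if j = 0 ∨ j = 1 ∨ j = 3 ∨ j = K + 8 then 2
      else if j = 4 ∨ j = 5 ∨ j = K + 6 ∨ j = K + 7 then 1
      else 0 := by
  have hN : 8 ≤ K + 8 := by omega
  have hmod : (K + 8) % 3 = 0 ∨ (K + 8) % 3 = 1 ∨ (K + 8) % 3 = 2 := by omega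
  rcases Nat.lt_or_ge j 6 with h6 | h6
  · interval_cases j
    · rw [if_neg (show ¬(1 ≤ 0) by omega), if_neg (show ¬(2 ≤ 0) by omega), cB_0,
        if_neg (show ¬((0:ℕ) = 2) by omega), if_pos (by omega)]
      norm_num
    · rw [if_pos (show 1 ≤ 1 by omega), if_neg (show ¬(2 ≤ 1) by omega), cB_0, cB_1,
        if_neg (show ¬((1:ℕ) = 2) by omega), if_pos (by omega)]
      norm_num
    · rw [if_pos (show 1 ≤ 2 by omega), if_pos (show 2 ≤ 2 by omega), cB_0, cB_1,
        cB_mid _ 2 hN (by omega), qq_2, if_pos (show (2:ℕ) = 2 by rfl)]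
      norm_num
    · rw [if_pos (show 1 ≤ 3 by omega), if_pos (show 2 ≤ 3 by omega), cB_3 _ hN, cB_1,
        cB_mid _ 2 hN (by omega), qq_2, if_neg (show ¬((3:ℕ) = 2) by omega),
        if_pos (show (3:ℕ) = 0 ∨ (3:ℕ) = 1 ∨ (3:ℕ) = 3 ∨ 3 = K + 8 by omega)]
      norm_num
    · rw [if_pos (show 1 ≤ 4 by omega), if_pos (show 2 ≤ 4 by omega), cB_3 _ hN,
        cB_mid _ 4 hN (by omega), cB_mid _ 2 hN (by omega), qq_4, qq_2,
        if_neg (show ¬((4:ℕ) = 2) by omega),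
        if_neg (show ¬((4:ℕ) = 0 ∨ (4:ℕ) = 1 ∨ (4:ℕ) = 3 ∨ 4 = K + 8) by omega),
        if_pos (show (4:ℕ) = 4 ∨ (4:ℕ) = 5 ∨ 4 = K + 6 ∨ 4 = K + 7 by omega)]
      norm_num
    · rw [if_pos (show 1 ≤ 5 by omega), if_pos (show 2 ≤ 5 by omega), cB_3 _ hN,
        cB_mid _ 4 hN (by omega), cB_mid _ 5 hN (by omega), qq_4, qq_5,
        if_neg (show ¬((5:ℕ) = 2) by omega),
        if_neg (show ¬((5:ℕ) = 0 ∨ (5:ℕ) = 1 ∨ (5:ℕ) = 3 ∨ 5 = K + 8) by omega),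
        if_pos (show (5:ℕ) = 4 ∨ (5:ℕ) = 5 ∨ 5 = K + 6 ∨ 5 = K + 7 by omega)]
      norm_num
  · rcases Nat.lt_or_ge j (K + 6) with hm | hm
    · rw [if_pos (show 1 ≤ j by omega), if_pos (show 2 ≤ j by omega),
        cB_mid _ j hN (by omega), cB_mid _ (j-1) hN (by omega), cB_mid _ (j-2) hN (by omega),
        if_neg (show ¬(j = 2) by omega),
        if_neg (show ¬(j = 0 ∨ j = 1 ∨ j = 3 ∨ j = K + 8) by omega),
        if_neg (show ¬(j = 4 ∨ j = 5 ∨ j = K + 6 ∨ j = K + 7) by omega)]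
      exact qq_sum j (by omega)
    · have hj3 : j = K + 6 ∨ j = K + 7 ∨ j = K + 8 := by omega
      rcases hj3 with rfl | rfl | rfl
      · rw [show K + 6 - 1 = K + 5 by omega, show K + 6 - 2 = K + 4 by omega,
          if_pos (show 1 ≤ K + 6 by omega), if_pos (show 2 ≤ K + 6 by omega),
          cB_K6, cB_mid _ (K+5) hN (by omega), cB_mid _ (K+4) hN (by omega),
          if_neg (show ¬(K + 6 = 2) by omega),
          if_neg (show ¬(K + 6 = 0 ∨ K + 6 = 1 ∨ K + 6 = 3 ∨ K + 6 = K + 8) by omega),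
          if_pos (show K + 6 = 4 ∨ K + 6 = 5 ∨ K + 6 = K + 6 ∨ K + 6 = K + 7 by omega)]
        rcases hmod with h | h | h
        · simp only [qq, h, show (K+5) % 3 = 0 by omega, show (K+4) % 3 = 2 by omega]
          norm_num
        · simp only [qq, h, show (K+5) % 3 = 1 by omega, show (K+4) % 3 = 0 by omega]
          norm_num
        · simp only [qq, h, show (K+5) % 3 = 2 by omega, show (K+4) % 3 = 1 by omega]
          norm_num
      · rw [show K + 7 - 1 = K + 6 by omega, show K + 7 - 2 = K + 5 by omega,
          if_pos (show 1 ≤ K + 7 by omega), if_pos (show 2 ≤ K + 7 by omega),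
          cB_K7, cB_K6, cB_mid _ (K+5) hN (by omega),
          if_neg (show ¬(K + 7 = 2) by omega),
          if_neg (show ¬(K + 7 = 0 ∨ K + 7 = 1 ∨ K + 7 = 3 ∨ K + 7 = K + 8) by omega),
          if_pos (show K + 7 = 4 ∨ K + 7 = 5 ∨ K + 7 = K + 6 ∨ K + 7 = K + 7 by omega)]
        rcases hmod with h | h | h
        · simp only [qq, h, show (K+5) % 3 = 0 by omega]; norm_num
        · simp only [qq, h, show (K+5) % 3 = 1 by omega]; norm_num
        · simp only [qq, h, show (K+5) % 3 = 2 by omega]; norm_num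
      · rw [show K + 8 - 1 = K + 7 by omega, show K + 8 - 2 = K + 6 by omega,
          if_pos (show 1 ≤ K + 8 by omega), if_pos (show 2 ≤ K + 8 by omega),
          cB_K8, cB_K7, cB_K6,
          if_neg (show ¬(K + 8 = 2) by omega),
          if_pos (show K + 8 = 0 ∨ K + 8 = 1 ∨ K + 8 = 3 ∨ K + 8 = K + 8 by omega)]
        rcases hmod with h | h | h
        · simp only [h]; norm_num
        · simp only [h]; norm_num
        · simp only [h]; norm_num

lemma key (K : ℕ) : spiralCoeffMat (K + 8) = Tmat (K + 8) * Bmat (K + 8) := by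
  have h2 : K + 8 - 2 = K + 6 := by omega
  have h1 : K + 8 - 1 = K + 7 := by omega
  ext i j
  rw [Matrix.mul_apply]
  have hi : (i : ℕ) < K + 9 := i.isLt
  have hjlt : (j : ℕ) < K + 9 := j.isLt
  by_cases hrow : (i : ℕ) ≤ K + 6
  · -- banded rows
    have hs : (∑ k, Tmat (K + 8) i k * Bmat (K + 8) k j)
        = Bmat (K + 8) i j := by
      rw [Finset.sum_eq_single i]
      · simp only [Tmat, Matrix.of_apply, h2]
        rw [if_pos hrow, if_pos trivial, one_mul]
      · intro b _ hb
        simp only [Tmat, Matrix.of_apply, h2]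
        rw [if_pos hrow, if_neg (fun h => hb (Fin.ext h)), zero_mul]
      · intro h; exact absurd (Finset.mem_univ i) h
    rw [hs]
    simp only [spiralCoeffMat, Bmat, Matrix.of_apply, h2]
    rw [if_pos hrow]
  · by_cases hrow1 : (i : ℕ) = K + 7
    · have hs : (∑ k, Tmat (K + 8) i k * Bmat (K + 8) k j)
          = ∑ k ∈ Finset.range (K + 9),
              cA (K + 8) k * (if (j : ℕ) = k ∨ (j : ℕ) = k + 1 ∨ (j : ℕ) = k + 2
                then (1:ℝ) else 0) := by
        rw [← Fin.sum_univ_eq_sum_range (fun k =>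
          cA (K + 8) k * (if (j : ℕ) = k ∨ (j : ℕ) = k + 1 ∨ (j : ℕ) = k + 2
            then (1:ℝ) else 0)) (K + 9)]
        apply Finset.sum_congr rfl
        intro k _
        simp only [Tmat, Bmat, Matrix.of_apply, h2, h1]
        rw [if_neg hrow, if_pos hrow1]
      rw [hs, sum_band (K + 9) (j : ℕ) hjlt (cA (K + 8)), rowA K (j : ℕ) (by omega)]
      simp only [spiralCoeffMat, Matrix.of_apply, h2, h1]
      rw [if_neg hrow, if_pos hrow1]
    · have hs : (∑ k, Tmat (K + 8) i k * Bmat (K + 8) k j)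
          = ∑ k ∈ Finset.range (K + 9),
              cB (K + 8) k * (if (j : ℕ) = k ∨ (j : ℕ) = k + 1 ∨ (j : ℕ) = k + 2
                then (1:ℝ) else 0) := by
        rw [← Fin.sum_univ_eq_sum_range (fun k =>
          cB (K + 8) k * (if (j : ℕ) = k ∨ (j : ℕ) = k + 1 ∨ (j : ℕ) = k + 2
            then (1:ℝ) else 0)) (K + 9)]
        apply Finset.sum_congr rfl
        intro k _
        simp only [Tmat, Bmat, Matrix.of_apply, h2, h1]
        rw [if_neg hrow, if_neg hrow1]
      rw [hs, sum_band (K + 9) (j : ℕ) hjlt (cB (K + 8)), rowB K (j : ℕ) (by omega)]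
      simp only [spiralCoeffMat, Matrix.of_apply, h2, h1]
      rw [if_neg hrow, if_neg hrow1]

lemma det_Bmat (N : ℕ) : (Bmat N).det = 1 := by
  rw [Matrix.det_of_upperTriangular]
  · apply Finset.prod_eq_one
    intro i _
    simp only [Bmat, Matrix.of_apply]
    rw [if_pos (Or.inl trivial)]
  · intro i j hji
    have hji' : (j : ℕ) < (i : ℕ) := hji
    simp only [Bmat, Matrix.of_apply]
    rw [if_neg (by omega)]

lemma det_Tmat (K : ℕ) :
    (Tmat (K + 8)).det
      = cA (K + 8) (K + 7) * cB (K + 8) (K + 8)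
        - cA (K + 8) (K + 8) * cB (K + 8) (K + 7) := by
  have h2 : K + 8 - 2 = K + 6 := by omega
  have h1 : K + 8 - 1 = K + 7 := by omega
  set e : Fin (K + 7) ⊕ Fin 2 ≃ Fin (K + 9) := finSumFinEquiv with he
  rw [← Matrix.det_submatrix_equiv_self e (Tmat (K + 8))]
  set S : Matrix (Fin (K + 7) ⊕ Fin 2) (Fin (K + 7) ⊕ Fin 2) ℝ
    := (Tmat (K + 8)).submatrix e e with hS
  have hL : ∀ a : Fin (K + 7), ((e (Sum.inl a)) : ℕ) = (a : ℕ) := by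
    intro a; rw [he]; simp
  have hR : ∀ a : Fin 2, ((e (Sum.inr a)) : ℕ) = K + 7 + (a : ℕ) := by
    intro a; rw [he]; simp
  have hblocks : S = Matrix.fromBlocks S.toBlocks₁₁ S.toBlocks₁₂ S.toBlocks₂₁ S.toBlocks₂₂ :=
    (Matrix.fromBlocks_toBlocks S).symm
  have h11 : S.toBlocks₁₁ = 1 := by
    ext a b
    have haK : (a : ℕ) < K + 7 := a.isLt
    have hab : ((b : ℕ) = (a : ℕ)) ↔ (a = b) :=
      ⟨fun h => Fin.ext h.symm, fun h => congrArg Fin.val h.symm⟩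
    simp only [Matrix.toBlocks₁₁, Matrix.of_apply, hS, Matrix.submatrix_apply,
      Tmat, hL, h2, h1]
    rw [if_pos (show (a : ℕ) ≤ K + 6 by omega)]
    simp only [hab, Matrix.one_apply]
  have h12 : S.toBlocks₁₂ = 0 := by
    ext a b
    have haK : (a : ℕ) < K + 7 := a.isLt
    simp only [Matrix.toBlocks₁₂, Matrix.of_apply, hS, Matrix.submatrix_apply,
      Tmat, hL, hR, h2, h1]
    rw [if_pos (show (a : ℕ) ≤ K + 6 by omega),
      if_neg (show ¬(K + 7 + (b : ℕ) = (a : ℕ)) by omega)]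
    rfl
  have hvals : ∀ (a b : Fin 2), S.toBlocks₂₂ a b
      = (if (a : ℕ) = 0 then cA (K + 8) (K + 7 + (b : ℕ))
          else cB (K + 8) (K + 7 + (b : ℕ))) := by
    intro a b
    simp only [Matrix.toBlocks₂₂, Matrix.of_apply, hS, Matrix.submatrix_apply,
      Tmat, hR, h2, h1]
    rw [if_neg (show ¬(K + 7 + (a : ℕ) ≤ K + 6) by omega)]
    by_cases ha0 : (a : ℕ) = 0
    · rw [if_pos (show K + 7 + (a : ℕ) = K + 7 by omega), if_pos ha0]
    · rw [if_neg (show ¬(K + 7 + (a : ℕ) = K + 7) by omega), if_neg ha0]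
  have e00 : S.toBlocks₂₂ 0 0 = cA (K + 8) (K + 7) := by
    rw [hvals 0 0]; norm_num
  have e01 : S.toBlocks₂₂ 0 1 = cA (K + 8) (K + 8) := by
    rw [hvals 0 1]; norm_num
  have e10 : S.toBlocks₂₂ 1 0 = cB (K + 8) (K + 7) := by
    rw [hvals 1 0]; norm_num
  have e11 : S.toBlocks₂₂ 1 1 = cB (K + 8) (K + 8) := by
    rw [hvals 1 1]; norm_num
  rw [hblocks, h11, h12, Matrix.det_fromBlocks_zero₁₂, Matrix.det_one, one_mul,
    Matrix.det_fin_two, e00, e01, e10, e11]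

lemma det_spiral' (K : ℕ) :
    (spiralCoeffMat (K + 8)).det = if (K + 8) % 3 = 1 then 0 else 3 := by
  rw [key, Matrix.det_mul, det_Bmat, mul_one, det_Tmat, cA_K7, cA_K8, cB_K7, cB_K8]
  have hmod : (K + 8) % 3 = 0 ∨ (K + 8) % 3 = 1 ∨ (K + 8) % 3 = 2 := by omega
  rcases hmod with h | h | h
  · simp only [h]; norm_num
  · simp only [h]; norm_num
  · simp only [h]; norm_num

/-- `det A = 3` if `N mod 3 ∈ {0, 2}` and `det A = 0` if `N mod 3 = 1`. -/
theorem det_spiralCoeffMat (N : ℕ) (hN : 8 ≤ N) :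
    ((N % 3 = 0 ∨ N % 3 = 2) → (spiralCoeffMat N).det = 3) ∧
    (N % 3 = 1 → (spiralCoeffMat N).det = 0) := by
  obtain ⟨K, rfl⟩ : ∃ K, N = K + 8 := ⟨N - 8, by omega⟩
  constructor
  · intro h
    rw [det_spiral', if_neg (by omega)]
  · intro h
    rw [det_spiral', if_pos h]
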